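/- arXiv:2210.08501 — 3 statements merged into one kernel-verified Lean document; each statement's English description precedes it below -/
import Mathlib

section
/- The function g(δ) = (1/δ + 1/(2-δ)) · ln(δ/(2-δ)) is strictly increasing on the interval (0, 1) and tends to -∞ as δ tends to 0 from the right. -/
open Real Filter Set Topology

/-
On (0,1) the factor 1/δ + 1/(2-δ) = 2/(δ(2-δ)) is positive and decreasing, while
log(δ/(2-δ)) is negative and strictly increasing; the product of such a pair is strictly
increasing. As δ → 0⁺ the first factor tends to +∞ and the second to -∞.
-/

lemma AntitoneOn.mul_strictMonoOn_of_pos_of_neg {α R : Type*} [Preorder α] [Ring R]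
    [PartialOrder R] [IsStrictOrderedRing R] {s : Set α} {u v : α → R}
    (hu : AntitoneOn u s) (hv : StrictMonoOn v s) (hu0 : ∀ x ∈ s, 0 < u x)
    (hv0 : ∀ x ∈ s, v x < 0) : StrictMonoOn (fun x => u x * v x) s := by
  intro a ha b hb hab
  calc u a * v a ≤ u b * v a := mul_le_mul_of_nonpos_right (hu ha hb hab.le) (hv0 a ha).le
    _ < u b * v b := mul_lt_mul_of_pos_left (hv ha hb hab) (hu0 b hb)

lemma antitoneOn_one_div_add_one_div_two_sub :
    AntitoneOn (fun δ : ℝ => 1 / δ + 1 / (2 - δ)) (Ioc 0 1) := by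
  rintro a ⟨ha0, ha1⟩ b ⟨hb0, hb1⟩ hab
  have h2a : 0 < 2 - a := by linarith
  have h2b : 0 < 2 - b := by linarith
  dsimp only
  rw [div_add_div _ _ hb0.ne' h2b.ne', div_add_div _ _ ha0.ne' h2a.ne',
    div_le_div_iff₀ (by positivity) (by positivity)]
  nlinarith [mul_nonneg (sub_nonneg.2 hab) (mul_nonneg (sub_nonneg.2 ha1) (sub_nonneg.2 hb1))]

lemma strictMonoOn_div_two_sub : StrictMonoOn (fun δ : ℝ => δ / (2 - δ)) (Iio 2) := by
  intro a ha b hb hab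
  have h2a : 0 < 2 - a := sub_pos.2 ha
  have h2b : 0 < 2 - b := sub_pos.2 hb
  rw [div_lt_div_iff₀ h2a h2b]
  nlinarith

lemma strictMonoOn_log_div_two_sub :
    StrictMonoOn (fun δ : ℝ => log (δ / (2 - δ))) (Ioo 0 2) :=
  strictMonoOn_log.comp (strictMonoOn_div_two_sub.mono Ioo_subset_Iio_self)
    fun _ hδ => div_pos hδ.1 (sub_pos.2 hδ.2)

lemma log_div_two_sub_neg {δ : ℝ} (h0 : 0 < δ) (h1 : δ < 1) : log (δ / (2 - δ)) < 0 :=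
  log_neg (div_pos h0 (by linarith)) ((div_lt_one (by linarith)).2 (by linarith))

lemma tendsto_one_div_add_one_div_two_sub_nhdsGT_zero :
    Tendsto (fun δ : ℝ => 1 / δ + 1 / (2 - δ)) (𝓝[>] 0) atTop := by
  have h2 : Tendsto (fun δ : ℝ => 1 / (2 - δ)) (𝓝 0) (𝓝 (1 / (2 - 0))) :=
    tendsto_const_nhds.div (tendsto_const_nhds.sub tendsto_id) (by norm_num)
  simpa only [one_div] using tendsto_inv_nhdsGT_zero.atTop_add (h2.mono_left nhdsWithin_le_nhds)

lemma tendsto_log_div_two_sub_nhdsGT_zero :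
    Tendsto (fun δ : ℝ => log (δ / (2 - δ))) (𝓝[>] 0) atBot := by
  refine tendsto_log_nhdsGT_zero.comp (tendsto_nhdsWithin_iff.2 ⟨?_, ?_⟩)
  · have h : Tendsto (fun δ : ℝ => δ / (2 - δ)) (𝓝 0) (𝓝 (0 / (2 - 0))) :=
      tendsto_id.div (tendsto_const_nhds.sub tendsto_id) (by norm_num)
    simpa using h.mono_left nhdsWithin_le_nhds
  · filter_upwards [Ioo_mem_nhdsGT (show (0 : ℝ) < 2 by norm_num)] with δ hδ
    exact div_pos hδ.1 (sub_pos.2 hδ.2)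

theorem stmt_5 :
    StrictMonoOn (fun δ : ℝ => (1 / δ + 1 / (2 - δ)) * Real.log (δ / (2 - δ)))
      (Set.Ioo (0 : ℝ) 1) ∧
    Filter.Tendsto (fun δ : ℝ => (1 / δ + 1 / (2 - δ)) * Real.log (δ / (2 - δ)))
      (nhdsWithin 0 (Set.Ioi 0)) Filter.atBot := by
  refine ⟨?_, tendsto_one_div_add_one_div_two_sub_nhdsGT_zero.atTop_mul_atBot₀
    tendsto_log_div_two_sub_nhdsGT_zero⟩
  refine AntitoneOn.mul_strictMonoOn_of_pos_of_neg
    (antitoneOn_one_div_add_one_div_two_sub.mono Ioo_subset_Ioc_self)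
    (strictMonoOn_log_div_two_sub.mono (Ioo_subset_Ioo_right one_le_two)) ?_ ?_
  · exact fun δ hδ => add_pos (one_div_pos.2 hδ.1) (one_div_pos.2 (by linarith [hδ.2]))
  · exact fun δ hδ => log_div_two_sub_neg hδ.1 hδ.2
end

section
/- For λ > 2, the function F(r) = (1+r)ln(1+r) + (1-r)ln(1-r) - (λ/2)r² on (-1,1) has a double-well structure: F'(r) = ln((1+r)/(1-r)) - λr vanishes at exactly three points 0, r_*, -r_* with r_* ∈ (0,1), F attains a local maximum at 0, and F attains its global minimum on (-1,1) at ±r_*. -/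
/-!
F' = f is odd and F is even, so everything reduces to [0, 1). There f' = 2 / (1 - r²) - λ is
negative below c = √(1 - 2/λ) and positive above, so f, which vanishes at 0, dips below zero on
(0, c] and then increases; since f(r) → ∞ as r → 1 it crosses zero exactly once, at r_*.
Hence F decreases on [0, r_*] and increases on [r_*, 1), and evenness transfers this to (-1, 0].
-/

open Real Set Filter Topology

theorem Function.Even.map_abs {α β : Type*} [AddGroup α] [LinearOrder α] {F : α → β}
    (heven : F.Even) (r : α) : F |r| = F r := by
  rcases abs_choice r with h | h <;> rw [h]
  exact heven r

theorem Function.Odd.map_abs_eq_zero_iff {α β : Type*} [AddGroup α] [LinearOrder α]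
    [SubtractionMonoid β] {g : α → β} (hodd : g.Odd) (r : α) : g |r| = 0 ↔ g r = 0 := by
  rcases abs_choice r with h | h <;> rw [h]
  rw [hodd, neg_eq_zero]

theorem Function.Even.isMinOn_Ioo {F : ℝ → ℝ} (heven : F.Even) {s b : ℝ} (hs : 0 ≤ s)
    (hanti : AntitoneOn F (Icc 0 s)) (hmono : MonotoneOn F (Ico s b)) :
    IsMinOn F (Ioo (-b) b) s := by
  intro r hr
  rw [mem_ofPred_eq, ← heven.map_abs r]
  have hrb : |r| < b := abs_lt.2 hr
  rcases le_total |r| s with h | h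
  · exact hanti ⟨abs_nonneg r, h⟩ ⟨hs, le_rfl⟩ h
  · exact hmono ⟨le_rfl, h.trans_lt hrb⟩ ⟨h, hrb⟩ h

theorem Function.Even.isLocalMax_zero {F : ℝ → ℝ} (heven : F.Even) {s : ℝ} (hs : 0 < s)
    (hanti : AntitoneOn F (Icc 0 s)) : IsLocalMax F 0 := by
  filter_upwards [Ioo_mem_nhds (neg_neg_of_pos hs) hs] with r hr
  rw [← heven.map_abs]
  exact hanti ⟨le_rfl, hs.le⟩ ⟨abs_nonneg r, (abs_lt.2 hr).le⟩ (abs_nonneg r)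

theorem exists_zero_of_strictAntiOn_of_strictMonoOn {g : ℝ → ℝ} {p a b t : ℝ} (hpa : p < a)
    (hgp : g p = 0) (hanti : StrictAntiOn g (Icc p a)) (hmono : StrictMonoOn g (Ico a b))
    (hcont : ContinuousOn g (Ico a b)) (hpt : p < t) (htb : t < b) (hgt : 0 < g t) :
    ∃ s ∈ Ioo a b, g s = 0 ∧ (∀ r ∈ Ioo p s, g r < 0) ∧ ∀ r ∈ Ioo s b, 0 < g r := by
  have hga : g a < 0 := hgp ▸ hanti (left_mem_Icc.2 hpa.le) (right_mem_Icc.2 hpa.le) hpa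
  have hat : a < t := by
    by_contra! hta
    exact hgt.not_gt (hgp ▸ hanti (left_mem_Icc.2 hpa.le) ⟨hpt.le, hta⟩ hpt)
  obtain ⟨s, ⟨has, hst⟩, hgs⟩ : ∃ s ∈ Ioo a t, g s = 0 :=
    intermediate_value_Ioo hat.le (hcont.mono (Icc_subset_Ico_right htb)) ⟨hga, hgt⟩
  have hs : s ∈ Ico a b := ⟨has.le, hst.trans htb⟩
  refine ⟨s, ⟨has, hst.trans htb⟩, hgs, fun r ⟨hpr, hrs⟩ => ?_, fun r ⟨hsr, hrb⟩ => ?_⟩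
  · rcases le_or_gt r a with hra | har
    · exact hgp ▸ hanti (left_mem_Icc.2 hpa.le) ⟨hpr.le, hra⟩ hpr
    · exact hgs ▸ hmono ⟨har.le, hrs.trans hs.2⟩ hs hrs
  · exact hgs ▸ hmono hs ⟨has.le.trans hsr.le, hrb⟩ hsr

theorem setOf_mem_Ioo_and_eq_zero_of_odd {g : ℝ → ℝ} (hodd : g.Odd) {s b : ℝ}
    (hs : s ∈ Ioo 0 b) (hgs : g s = 0) (hneg : ∀ r ∈ Ioo 0 s, g r < 0)
    (hpos : ∀ r ∈ Ioo s b, 0 < g r) :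
    {r | r ∈ Ioo (-b) b ∧ g r = 0} = {0, s, -s} := by
  have hzero : ∀ r, 0 ≤ r → r < b → (g r = 0 ↔ r = 0 ∨ r = s) := by
    intro r hr0 hrb
    refine ⟨fun hgr => ?_, ?_⟩
    · by_contra! h
      rcases lt_trichotomy r s with hrs | rfl | hsr
      · exact (hneg r ⟨lt_of_le_of_ne hr0 (Ne.symm h.1), hrs⟩).ne hgr
      · exact h.2 rfl
      · exact (hpos r ⟨hsr, hrb⟩).ne' hgr
    · rintro (rfl | rfl)
      exacts [hodd.map_zero, hgs]
  ext r
  have hcases : r = 0 ∨ r = s ∨ r = -s ↔ |r| = 0 ∨ |r| = s := by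
    rw [abs_eq_zero, abs_eq hs.1.le]
  simp only [mem_ofPred_eq, mem_insert_iff, mem_singleton_iff, hcases, mem_Ioo, ← abs_lt]
  rw [← hodd.map_abs_eq_zero_iff]
  refine ⟨fun ⟨hr, hgr⟩ => (hzero _ (abs_nonneg r) hr).1 hgr, fun h => ?_⟩
  have hrb : |r| < b := by rcases h with h | h <;> rw [h] <;> linarith [hs.1, hs.2]
  exact ⟨hrb, (hzero _ (abs_nonneg r) hrb).2 h⟩

noncomputable def freeEnergy (lam r : ℝ) : ℝ :=
  (1 + r) * log (1 + r) + (1 - r) * log (1 - r) - lam / 2 * r ^ 2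

noncomputable def freeEnergyDeriv (lam r : ℝ) : ℝ :=
  log ((1 + r) / (1 - r)) - lam * r

section FreeEnergy

variable {lam : ℝ}

theorem freeEnergy_even (lam : ℝ) : (freeEnergy lam).Even := by
  intro r
  simp only [freeEnergy, sub_neg_eq_add, ← sub_eq_add_neg, neg_sq]
  ring

theorem freeEnergyDeriv_odd (lam : ℝ) : (freeEnergyDeriv lam).Odd := by
  intro r
  simp only [freeEnergyDeriv, sub_neg_eq_add, ← sub_eq_add_neg]
  rw [← inv_div, log_inv]
  ring

theorem hasDerivAt_freeEnergy {r : ℝ} (hr : r ∈ Ioo (-1) 1) :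
    HasDerivAt (freeEnergy lam) (freeEnergyDeriv lam r) r := by
  have h₁ : 1 + r ≠ 0 := by linarith [hr.1]
  have h₂ : 1 - r ≠ 0 := by linarith [hr.2]
  have d₁ : HasDerivAt (fun x => 1 + x) 1 r := (hasDerivAt_id r).const_add 1
  have d₂ : HasDerivAt (fun x => 1 - x) (-1) r := (hasDerivAt_id r).const_sub 1
  refine (((d₁.mul (d₁.log h₁)).add (d₂.mul (d₂.log h₂))).sub
    ((hasDerivAt_pow 2 r).const_mul (lam / 2))).congr_deriv ?_
  rw [freeEnergyDeriv, log_div h₁ h₂]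
  field_simp
  ring

theorem hasDerivAt_freeEnergyDeriv {r : ℝ} (hr : r ∈ Ioo (-1) 1) :
    HasDerivAt (freeEnergyDeriv lam) (2 / (1 - r ^ 2) - lam) r := by
  have h₁ : 1 + r ≠ 0 := by linarith [hr.1]
  have h₂ : 1 - r ≠ 0 := by linarith [hr.2]
  have d₁ : HasDerivAt (fun x => 1 + x) 1 r := (hasDerivAt_id r).const_add 1
  have d₂ : HasDerivAt (fun x => 1 - x) (-1) r := (hasDerivAt_id r).const_sub 1
  refine (((d₁.div d₂ h₂).log (div_ne_zero h₁ h₂)).sub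
    ((hasDerivAt_id r).const_mul lam)).congr_deriv ?_
  rw [show 1 - r ^ 2 = (1 + r) * (1 - r) by ring, Pi.div_apply]
  field_simp
  ring

theorem continuousOn_freeEnergy : ContinuousOn (freeEnergy lam) (Ioo (-1) 1) :=
  fun _ hr => (hasDerivAt_freeEnergy hr).continuousAt.continuousWithinAt

theorem continuousOn_freeEnergyDeriv : ContinuousOn (freeEnergyDeriv lam) (Ioo (-1) 1) :=
  fun _ hr => (hasDerivAt_freeEnergyDeriv hr).continuousAt.continuousWithinAt

variable {c : ℝ}

theorem strictAntiOn_freeEnergyDeriv (hlam : 0 < lam) (hc : lam * (1 - c ^ 2) = 2) :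
    StrictAntiOn (freeEnergyDeriv lam) (Icc 0 c) := by
  have hc₁ : c < 1 := by
    have : 0 < 1 - c ^ 2 := pos_of_mul_pos_right (hc ▸ two_pos) hlam.le
    nlinarith
  have hsub : Icc 0 c ⊆ Ioo (-1) 1 := fun x hx => ⟨by linarith [hx.1], hx.2.trans_lt hc₁⟩
  refine strictAntiOn_of_hasDerivWithinAt_neg (convex_Icc 0 c)
    (continuousOn_freeEnergyDeriv.mono hsub)
    (fun x hx => (hasDerivAt_freeEnergyDeriv (hsub (interior_subset hx))).hasDerivWithinAt)
    fun x hx => ?_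
  rw [interior_Icc] at hx
  have hx₁ : 0 < 1 - x ^ 2 := by nlinarith [hx.1, hx.2]
  have hxc : x ^ 2 < c ^ 2 := pow_lt_pow_left₀ hx.2 hx.1.le two_ne_zero
  rw [sub_neg, div_lt_iff₀ hx₁]
  nlinarith [mul_lt_mul_of_pos_left hxc hlam]

theorem strictMonoOn_freeEnergyDeriv (hlam : 0 < lam) (hc₀ : 0 ≤ c)
    (hc : lam * (1 - c ^ 2) = 2) : StrictMonoOn (freeEnergyDeriv lam) (Ico c 1) := by
  have hsub : Ico c 1 ⊆ Ioo (-1) 1 := Ico_subset_Ioo_left (by linarith)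
  refine strictMonoOn_of_hasDerivWithinAt_pos (convex_Ico c 1)
    (continuousOn_freeEnergyDeriv.mono hsub)
    (fun x hx => (hasDerivAt_freeEnergyDeriv (hsub (interior_subset hx))).hasDerivWithinAt)
    fun x hx => ?_
  rw [interior_Ico] at hx
  have hx₁ : 0 < 1 - x ^ 2 := by nlinarith [hx.1, hx.2]
  have hcx : c ^ 2 < x ^ 2 := pow_lt_pow_left₀ hx.1 hc₀ two_ne_zero
  rw [sub_pos, lt_div_iff₀ hx₁]
  nlinarith [mul_lt_mul_of_pos_left hcx hlam]

theorem freeEnergyDeriv_one_sub_exp_pos (hlam : 0 < lam) :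
    0 < freeEnergyDeriv lam (1 - exp (-lam)) := by
  have he : exp (-lam) < 1 := exp_lt_one_iff.2 (neg_neg_of_pos hlam)
  rw [freeEnergyDeriv, sub_sub_cancel, log_div (by linarith) (exp_pos _).ne', log_exp]
  have := log_pos (show 1 < 1 + (1 - exp (-lam)) by linarith)
  nlinarith [mul_pos hlam (exp_pos (-lam))]

theorem antitoneOn_freeEnergy {s : ℝ} (hs : s < 1)
    (hneg : ∀ r ∈ Ioo 0 s, freeEnergyDeriv lam r ≤ 0) :
    AntitoneOn (freeEnergy lam) (Icc 0 s) := by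
  have hsub : Icc 0 s ⊆ Ioo (-1) 1 := fun x hx => ⟨by linarith [hx.1], hx.2.trans_lt hs⟩
  refine antitoneOn_of_hasDerivWithinAt_nonpos (convex_Icc 0 s) (continuousOn_freeEnergy.mono hsub)
    (fun x hx => (hasDerivAt_freeEnergy (hsub (interior_subset hx))).hasDerivWithinAt) ?_
  rwa [interior_Icc]

theorem monotoneOn_freeEnergy {s : ℝ} (hs : -1 < s)
    (hpos : ∀ r ∈ Ioo s 1, 0 ≤ freeEnergyDeriv lam r) :
    MonotoneOn (freeEnergy lam) (Ico s 1) := by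
  have hsub : Ico s 1 ⊆ Ioo (-1) 1 := Ico_subset_Ioo_left hs
  refine monotoneOn_of_hasDerivWithinAt_nonneg (convex_Ico s 1) (continuousOn_freeEnergy.mono hsub)
    (fun x hx => (hasDerivAt_freeEnergy (hsub (interior_subset hx))).hasDerivWithinAt) ?_
  rwa [interior_Ico]

end FreeEnergy

theorem stmt_6 (lam : ℝ) (hlam : 2 < lam)
    (F : ℝ → ℝ) (hF : ∀ r, F r = (1 + r) * Real.log (1 + r) + (1 - r) * Real.log (1 - r)
      - lam / 2 * r ^ 2)
    (f : ℝ → ℝ) (hf : ∀ r, f r = Real.log ((1 + r) / (1 - r)) - lam * r) :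
    ∃ rs : ℝ, rs ∈ Set.Ioo (0 : ℝ) 1 ∧
      {r : ℝ | r ∈ Set.Ioo (-1 : ℝ) 1 ∧ f r = 0} = {0, rs, -rs} ∧
      IsLocalMax F 0 ∧
      (∀ r ∈ Set.Ioo (-1 : ℝ) 1, F rs ≤ F r) ∧ F rs = F (-rs) := by
  obtain rfl : F = freeEnergy lam := funext hF
  obtain rfl : f = freeEnergyDeriv lam := funext hf
  have hlam₀ : 0 < lam := by linarith
  set c := √(1 - 2 / lam)
  have h2lam : 0 < 1 - 2 / lam := sub_pos.2 ((div_lt_one hlam₀).2 hlam)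
  have hc₀ : 0 < c := sqrt_pos.2 h2lam
  have hc : lam * (1 - c ^ 2) = 2 := by
    rw [sq_sqrt h2lam.le]
    field_simp
    ring
  obtain ⟨rs, ⟨hcrs, hrs₁⟩, hzero, hneg, hpos⟩ :=
    exists_zero_of_strictAntiOn_of_strictMonoOn hc₀ (freeEnergyDeriv_odd lam).map_zero
      (strictAntiOn_freeEnergyDeriv hlam₀ hc) (strictMonoOn_freeEnergyDeriv hlam₀ hc₀.le hc)
      (continuousOn_freeEnergyDeriv.mono (Ico_subset_Ioo_left (by linarith)))
      (sub_pos.2 (exp_lt_one_iff.2 (by linarith))) (sub_lt_self 1 (exp_pos _))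
      (freeEnergyDeriv_one_sub_exp_pos hlam₀)
  have hrs : rs ∈ Ioo 0 1 := ⟨hc₀.trans hcrs, hrs₁⟩
  have hanti := antitoneOn_freeEnergy hrs₁ fun r hr => (hneg r hr).le
  have hmono := monotoneOn_freeEnergy (by linarith) fun r hr => (hpos r hr).le
  exact ⟨rs, hrs, setOf_mem_Ioo_and_eq_zero_of_odd (freeEnergyDeriv_odd lam) hrs hzero hneg hpos,
    (freeEnergy_even lam).isLocalMax_zero hrs.1 hanti,
    fun r hr => (freeEnergy_even lam).isMinOn_Ioo hrs.1.le hanti hmono hr,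
    ((freeEnergy_even lam) rs).symm⟩
end

section
/- Suppose nonnegative sequences (a_n), (b_n) and constants C, Ĉ ≥ 0, Δt > 0 with ĈΔt ≤ 1/2 satisfy a_{n+1} - a_n + Δt·b_{n+1} ≤ ĈΔt(a_{n+1} + a_n) + (Δt/2)·b_n + Δt·τ for all n ≥ 0, with a_0 = 0, b_0 = 0, τ ≥ 0. Then for all m with mΔt ≤ T one has a_m + (Δt/2)∑_{k=1}^m b_k ≤ τ·T·e^{4ĈT}. -/
/-!
Adding `(Δt/2) b n` to `a n + (Δt/2) ∑_{k ≤ n} b k` gives an energy `E n ≥ a n` with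
`(1 - ĈΔt) E (n+1) ≤ (1 + ĈΔt) E n + Δt τ`. Since `E 0 = 0`, induction gives
`E m ≤ m Δt τ r^m` with `r = (1 + ĈΔt)/(1 - ĈΔt)`, and `r ≤ 1 + 4ĈΔt ≤ exp (4ĈΔt)` as long as
`ĈΔt ≤ 1/2`, so `r^m ≤ exp (4Ĉ mΔt) ≤ exp (4ĈT)`.
-/

open Finset Real

theorem le_mul_mul_pow_of_one_sub_mul_le {E : ℕ → ℝ} {x c : ℝ} (hx0 : 0 ≤ x) (hx1 : x < 1)
    (hc : 0 ≤ c) (hE0 : E 0 = 0) (hstep : ∀ n, (1 - x) * E (n + 1) ≤ (1 + x) * E n + c)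
    (m : ℕ) : E m ≤ m * c * ((1 + x) / (1 - x)) ^ m := by
  have h1x : 0 < 1 - x := by linarith
  set r := (1 + x) / (1 - x)
  have hr : 1 ≤ r := (one_le_div h1x).mpr (by linarith)
  have hr_mul : (1 - x) * r = 1 + x := mul_div_cancel₀ _ h1x.ne'
  induction m with
  | zero => simp [hE0]
  | succ n ih =>
    have hc_le : c ≤ (1 + x) * r ^ n * c :=
      le_mul_of_one_le_left hc (one_le_mul_of_one_le_of_one_le (by linarith) (one_le_pow₀ hr))
    refine le_of_mul_le_mul_left ?_ h1x
    calc (1 - x) * E (n + 1) ≤ (1 + x) * E n + c := hstep n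
      _ ≤ (1 + x) * (n * c * r ^ n) + (1 + x) * r ^ n * c := by gcongr
      _ = (1 - x) * ((n + 1 : ℕ) * c * r ^ (n + 1)) := by
        push_cast; linear_combination (-((n + 1) * c * r ^ n)) * hr_mul

theorem one_add_div_one_sub_le_exp {x : ℝ} (hx0 : 0 ≤ x) (hx : x ≤ 1 / 2) :
    (1 + x) / (1 - x) ≤ exp (4 * x) := by
  calc (1 + x) / (1 - x) ≤ 4 * x + 1 := by
        rw [div_le_iff₀ (by linarith)]; nlinarith
    _ ≤ exp (4 * x) := add_one_le_exp _

noncomputable def modifiedEnergy (a b : ℕ → ℝ) (Δt : ℝ) (n : ℕ) : ℝ :=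
  a n + Δt / 2 * ∑ k ∈ Icc 1 n, b k + Δt / 2 * b n

section modifiedEnergy

variable {a b : ℕ → ℝ} {Δt : ℝ}

theorem le_modifiedEnergy (hΔt : 0 ≤ Δt) (hb : ∀ n, 0 ≤ b n) (n : ℕ) :
    a n + Δt / 2 * ∑ k ∈ Icc 1 n, b k ≤ modifiedEnergy a b Δt n :=
  le_add_of_nonneg_right (mul_nonneg (by linarith) (hb n))

theorem modifiedEnergy_succ_le {Chat τ : ℝ} (hChat : 0 ≤ Chat) (hΔt : 0 ≤ Δt)
    (hb : ∀ n, 0 ≤ b n) (n : ℕ)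
    (hrec : a (n + 1) - a n + Δt * b (n + 1)
      ≤ Chat * Δt * (a (n + 1) + a n) + Δt / 2 * b n + Δt * τ) :
    (1 - Chat * Δt) * modifiedEnergy a b Δt (n + 1)
      ≤ (1 + Chat * Δt) * modifiedEnergy a b Δt n + Δt * τ := by
  have hx : 0 ≤ Chat * Δt := mul_nonneg hChat hΔt
  have hE_sub : modifiedEnergy a b Δt (n + 1) - modifiedEnergy a b Δt n
      = a (n + 1) - a n + Δt * b (n + 1) - Δt / 2 * b n := by
    simp only [modifiedEnergy, sum_Icc_succ_top (Nat.le_add_left 1 n)]; ring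
  have ha_le (k : ℕ) : Chat * Δt * a k ≤ Chat * Δt * modifiedEnergy a b Δt k :=
    mul_le_mul_of_nonneg_left ((le_modifiedEnergy hΔt hb k).trans' <|
      le_add_of_nonneg_right <| mul_nonneg (by linarith) (sum_nonneg fun k _ => hb k)) hx
  linarith [ha_le n, ha_le (n + 1)]

end modifiedEnergy

theorem stmt_17_general (a b : ℕ → ℝ) (Chat Δt T τ : ℝ)
    (hChat : 0 ≤ Chat) (hΔt : 0 < Δt) (hsmall : Chat * Δt ≤ 1 / 2)
    (hb : ∀ n, 0 ≤ b n) (hτ : 0 ≤ τ)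
    (ha0 : a 0 = 0) (hb0 : b 0 = 0)
    (hrec : ∀ n, a (n + 1) - a n + Δt * b (n + 1)
      ≤ Chat * Δt * (a (n + 1) + a n) + Δt / 2 * b n + Δt * τ) :
    ∀ m : ℕ, (m : ℝ) * Δt ≤ T →
      a m + Δt / 2 * ∑ k ∈ Finset.Icc 1 m, b k ≤ τ * T * Real.exp (4 * Chat * T) := by
  intro m hmT
  have hx0 : 0 ≤ Chat * Δt := mul_nonneg hChat hΔt.le
  have hr0 : 0 ≤ (1 + Chat * Δt) / (1 - Chat * Δt) := div_nonneg (by linarith) (by linarith)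
  have hpow : ((1 + Chat * Δt) / (1 - Chat * Δt)) ^ m ≤ exp (4 * Chat * T) :=
    calc ((1 + Chat * Δt) / (1 - Chat * Δt)) ^ m ≤ exp (4 * (Chat * Δt)) ^ m := by
          gcongr; exact one_add_div_one_sub_le_exp hx0 hsmall
      _ = exp (4 * Chat * (m * Δt)) := by rw [← exp_nat_mul]; ring_nf
      _ ≤ exp (4 * Chat * T) := by gcongr
  calc a m + Δt / 2 * ∑ k ∈ Icc 1 m, b k ≤ modifiedEnergy a b Δt m :=
        le_modifiedEnergy hΔt.le hb m
    _ ≤ m * (Δt * τ) * ((1 + Chat * Δt) / (1 - Chat * Δt)) ^ m :=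
        le_mul_mul_pow_of_one_sub_mul_le hx0 (by linarith) (by positivity)
          (by simp [modifiedEnergy, ha0, hb0])
          (fun n => modifiedEnergy_succ_le hChat hΔt.le hb n (hrec n)) m
    _ = τ * (m * Δt) * ((1 + Chat * Δt) / (1 - Chat * Δt)) ^ m := by ring
    _ ≤ τ * T * exp (4 * Chat * T) := by
        have hT : 0 ≤ T := hmT.trans' (by positivity)
        gcongr

theorem stmt_17 (a b : ℕ → ℝ) (C Chat Δt T τ : ℝ)
    (hC : 0 ≤ C) (hChat : 0 ≤ Chat) (hΔt : 0 < Δt) (hsmall : Chat * Δt ≤ 1 / 2)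
    (ha : ∀ n, 0 ≤ a n) (hb : ∀ n, 0 ≤ b n) (hτ : 0 ≤ τ)
    (ha0 : a 0 = 0) (hb0 : b 0 = 0)
    (hrec : ∀ n, a (n + 1) - a n + Δt * b (n + 1)
      ≤ Chat * Δt * (a (n + 1) + a n) + Δt / 2 * b n + Δt * τ) :
    ∀ m : ℕ, (m : ℝ) * Δt ≤ T →
      a m + Δt / 2 * ∑ k ∈ Finset.Icc 1 m, b k ≤ τ * T * Real.exp (4 * Chat * T) :=
  stmt_17_general a b Chat Δt T τ hChat hΔt hsmall hb hτ ha0 hb0 hrec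
end
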